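/- Let θ be an irrational real number and f : ℕ → ℂ the function f(n) = e^{2πi n θ}. Let ω be a nonprincipal ultrafilter on ℕ and let g : ℕ → ℂ be a bounded function such that there exists an integer k ≥ 1 with E_ω(|g(·+k) − g|²) = 0. Then E_ω(n ↦ f(n)·conj(g(n))) = 0. -/

import Mathlib

/-! With `c = e^{2πikθ} ≠ 1`, the mean of `c · f·ḡ` is the mean of `f(n+k) ḡ(n)`. By
essential periodicity and Cauchy–Schwarz this agrees with the mean of `f(n+k) ḡ(n+k)`, and
shifting a bounded sequence does not change its mean along a nonprincipal ultrafilter. Hence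
`(c - 1) E_ω(f ḡ) = 0`. -/

open Filter Finset

/-- The function `n ↦ e^{2πi n θ}`. -/
noncomputable def linExp (θ : ℝ) (n : ℕ) : ℂ :=
  Complex.exp (2 * Real.pi * Complex.I * (n : ℂ) * (θ : ℂ))

open Topology

lemma norm_linExp (θ : ℝ) (n : ℕ) : ‖linExp θ n‖ = 1 := by
  rw [linExp, Complex.norm_exp]
  simp

lemma linExp_add (θ : ℝ) (n k : ℕ) : linExp θ (n + k) = linExp θ n * linExp θ k := by
  rw [linExp, linExp, linExp, ← Complex.exp_add]
  push_cast
  ring_nf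

lemma linExp_ne_one {θ : ℝ} (hθ : Irrational θ) {k : ℕ} (hk : k ≠ 0) : linExp θ k ≠ 1 := by
  rw [linExp, Ne, Complex.exp_eq_one_iff]
  rintro ⟨m, hm⟩
  have hkθ : ((k * θ : ℝ) : ℂ) = (m : ℝ) := by
    push_cast
    exact mul_left_cancel₀ Complex.two_pi_I_ne_zero (by linear_combination hm)
  rw [Complex.ofReal_inj] at hkθ
  exact hθ ⟨m / k, by push_cast; field_simp; linarith⟩

section SeminormedAddCommGroup

variable {E : Type*} [SeminormedAddCommGroup E]

lemma norm_sum_range_shift_sub_le {F : ℕ → E} {C : ℝ} (hF : ∀ n, ‖F n‖ ≤ C) (k N : ℕ) :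
    ‖∑ n ∈ range N, F (n + k) - ∑ n ∈ range N, F n‖ ≤ 2 * k * C := by
  have hsplit : ∑ n ∈ range N, F (n + k) - ∑ n ∈ range N, F n
      = ∑ n ∈ range k, F (N + n) - ∑ n ∈ range k, F n := by
    have h := (sum_range_add F k N).symm.trans (add_comm k N ▸ sum_range_add F N k)
    simp only [add_comm _ k]
    rw [sub_eq_sub_iff_add_eq_add, add_comm, h, add_comm]
  have hbound : ∀ G : ℕ → E, (∀ n, ‖G n‖ ≤ C) → ‖∑ n ∈ range k, G n‖ ≤ k * C := fun G hG => by
    simpa using norm_sum_le_of_le (range k) fun n _ => hG n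
  rw [hsplit]
  calc _ ≤ k * C + k * C := norm_sub_le_of_le (hbound _ fun n => hF _) (hbound _ hF)
    _ = 2 * k * C := by ring

lemma sum_range_div_le_sqrt_sum_sq_div (d : ℕ → ℝ) (N : ℕ) :
    (∑ n ∈ range N, d n) / N ≤ √((∑ n ∈ range N, d n ^ 2) / N) :=
  Real.le_sqrt_of_sq_le <| by
    simpa using sum_div_card_sq_le_sum_sq_div_card (s := range N) (f := d)

lemma tendsto_mean_norm_of_tendsto_mean_sq_norm {l : Filter ℕ} {G : ℕ → E}
    (h : Tendsto (fun N : ℕ => (∑ n ∈ range N, ‖G n‖ ^ 2) / N) l (𝓝 0)) :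
    Tendsto (fun N : ℕ => (∑ n ∈ range N, ‖G n‖) / N) l (𝓝 0) := by
  have hsqrt := (Real.continuous_sqrt.tendsto 0).comp h
  rw [Function.comp_def, Real.sqrt_zero] at hsqrt
  exact squeeze_zero (fun N => by positivity) (fun N => sum_range_div_le_sqrt_sum_sq_div _ N) hsqrt

end SeminormedAddCommGroup

section RCLike

variable {𝕜 : Type*} [RCLike 𝕜]

lemma norm_mean_sub_mean_le (a b : ℕ → 𝕜) (N : ℕ) :
    ‖1 / (N : 𝕜) * ∑ n ∈ range N, a n - 1 / (N : 𝕜) * ∑ n ∈ range N, b n‖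
      ≤ (∑ n ∈ range N, ‖a n - b n‖) / N := by
  rw [← mul_sub, ← sum_sub_distrib, norm_mul, norm_div, norm_one, RCLike.norm_natCast,
    one_div_mul_eq_div]
  gcongr
  exact norm_sum_le _ _

lemma tendsto_mean_sub_mean_of_tendsto_mean_sq {l : Filter ℕ} {a b : ℕ → 𝕜}
    (h : Tendsto (fun N : ℕ => (∑ n ∈ range N, ‖a n - b n‖ ^ 2) / N) l (𝓝 0)) :
    Tendsto (fun N : ℕ => 1 / (N : 𝕜) * ∑ n ∈ range N, a n - 1 / (N : 𝕜) * ∑ n ∈ range N, b n)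
      l (𝓝 0) :=
  squeeze_zero_norm (norm_mean_sub_mean_le a b) (tendsto_mean_norm_of_tendsto_mean_sq_norm h)

lemma tendsto_mean_shift_sub_mean {F : ℕ → 𝕜} {C : ℝ} (hF : ∀ n, ‖F n‖ ≤ C) (k : ℕ) :
    Tendsto (fun N : ℕ =>
        1 / (N : 𝕜) * ∑ n ∈ range N, F (n + k) - 1 / (N : 𝕜) * ∑ n ∈ range N, F n) atTop (𝓝 0) := by
  refine squeeze_zero_norm (fun N => ?_) (tendsto_const_div_atTop_nhds_zero_nat (2 * k * C))
  rw [← mul_sub, norm_mul, norm_div, norm_one, RCLike.norm_natCast, one_div_mul_eq_div]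
  gcongr
  exact norm_sum_range_shift_sub_le hF k N

end RCLike

lemma norm_linExp_mul_conj_sub (θ : ℝ) (g : ℕ → ℂ) (k n : ℕ) :
    ‖linExp θ k * (linExp θ n * starRingEnd ℂ (g n)) -
        linExp θ (n + k) * starRingEnd ℂ (g (n + k))‖ = ‖g (n + k) - g n‖ := by
  rw [linExp_add, mul_left_comm, ← mul_assoc, ← mul_sub, ← map_sub, norm_mul, norm_mul,
    norm_linExp, norm_linExp, RCLike.norm_conj, norm_sub_rev]
  ring

/-- For `θ` irrational, the function `n ↦ e^{2πi n θ}` is orthogonal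
(with respect to any mean state) to every bounded essentially periodic function. -/
theorem linExp_orthogonal_essentiallyPeriodic (θ : ℝ) (hθ : Irrational θ)
    (ω : Ultrafilter ℕ) (hω : (ω : Filter ℕ) ≤ Filter.cofinite)
    (g : ℕ → ℂ) (hb : ∃ C : ℝ, ∀ n, ‖g n‖ ≤ C)
    (hper : ∃ k : ℕ, 1 ≤ k ∧
      Filter.Tendsto (fun N : ℕ => (∑ n ∈ Finset.range N, ‖g (n + k) - g n‖ ^ 2) / N)
        (ω : Filter ℕ) (nhds 0)) :
    Filter.Tendsto (fun N : ℕ =>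
        (1 / (N : ℂ)) * ∑ n ∈ Finset.range N, linExp θ n * (starRingEnd ℂ) (g n))
      (ω : Filter ℕ) (nhds 0) := by
  obtain ⟨C, hC⟩ := hb
  obtain ⟨k, hk, hmean⟩ := hper
  set F : ℕ → ℂ := fun n => linExp θ n * starRingEnd ℂ (g n)
  set u : ℕ → ℂ := fun N => 1 / (N : ℂ) * ∑ n ∈ range N, F n
  set c := linExp θ k
  have hF : ∀ n, ‖F n‖ ≤ C := fun n => by simpa [F, norm_linExp] using hC n
  have hshift := (tendsto_mean_shift_sub_mean hF k).mono_left (Nat.cofinite_eq_atTop ▸ hω)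
  have htwist := tendsto_mean_sub_mean_of_tendsto_mean_sq (a := fun n => c * F n)
    (b := fun n => F (n + k)) (l := ω) (by simpa only [F, c, norm_linExp_mul_conj_sub] using hmean)
  have hcu : Tendsto (fun N => (c - 1) • u N) ω (𝓝 ((c - 1) • 0)) := by
    rw [smul_zero, ← add_zero 0]
    convert htwist.add hshift using 2 with N
    simp only [u, ← mul_sum]
    ring
  have hc : c - 1 ≠ 0 := sub_ne_zero.2 (linExp_ne_one hθ (Nat.one_le_iff_ne_zero.mp hk))
  exact (tendsto_const_smul_iff₀ hc).1 hcu
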